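/- Let G be an abelian group of order 2n, E a subgroup of index 2, O = G \ E, and let x, y ∈ E with x ∉ {y, -y}. Define Cayley graphs G_x, G_y on vertex set O as before. If G_x and G_y share a common edge {a,b}, then x + y ∈ W, where W = {c + c : c ∈ O}. -/

import Mathlib

/-- The Cayley graph `G_S` on the nontrivial coset `O = G \ H` of an index-2 subgroup
`H`: vertices are the elements of `O`, and `{y, z}` (with `y ≠ z`) is an edge iff
`y + z ∈ S` or `y - z ∈ S` or `z - y ∈ S`. -/
def cayley {G : Type*} [AddCommGroup G] (H : AddSubgroup G) (S : Set G) :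
    SimpleGraph {g : G // g ∉ H} where
  Adj y z := y ≠ z ∧ ((y : G) + z ∈ S ∨ (y : G) - z ∈ S ∨ (z : G) - y ∈ S)
  symm := by
    refine ⟨?_⟩
    rintro y z ⟨h1, h2⟩
    refine ⟨h1.symm, ?_⟩
    rcases h2 with h | h | h
    · exact Or.inl (by rwa [add_comm])
    · exact Or.inr (Or.inr h)
    · exact Or.inr (Or.inl h)
  loopless := by refine ⟨?_⟩; rintro y ⟨h1, _⟩; exact h1 rfl

/-- `x ≠ ±y` forces one of `x, y` to be `a + b` and the other `±(a - b)`. -/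
theorem add_eq_add_self_or_add_self_of_mem_sum_or_diff {G : Type*} [AddCommGroup G]
    {a b x y : G} (hx : a + b = x ∨ a - b = x ∨ b - a = x)
    (hy : a + b = y ∨ a - b = y ∨ b - a = y) (hxy1 : x ≠ y) (hxy2 : x ≠ -y) :
    x + y = a + a ∨ x + y = b + b := by
  rcases hx with rfl | rfl | rfl <;> rcases hy with rfl | rfl | rfl <;>
    first
    | exact absurd rfl hxy1
    | exact absurd (neg_sub _ _).symm hxy2
    | (left; abel1)
    | (right; abel1)

theorem stmt12_general {G : Type*} [AddCommGroup G]
    (E : AddSubgroup G) (x y : G) (hxy1 : x ≠ y) (hxy2 : x ≠ -y)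
    (hcommon : ((cayley E {x}).edgeSet ∩ (cayley E {y}).edgeSet).Nonempty) :
    x + y ∈ (fun c : G => c + c) '' ((E : Set G)ᶜ) := by
  obtain ⟨e, hex, hey⟩ := hcommon
  induction e using Sym2.ind with
  | _ a b =>
    obtain ⟨-, hax⟩ := hex
    obtain ⟨-, hay⟩ := hey
    simp only [Set.mem_singleton_iff] at hax hay
    rcases add_eq_add_self_or_add_self_of_mem_sum_or_diff hax hay hxy1 hxy2 with h | h
    · exact ⟨a, a.2, h.symm⟩
    · exact ⟨b, b.2, h.symm⟩

/-- For `x, y ∈ E` with `x ∉ {y, -y}`, if the Cayley graphs `G_x` and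
`G_y` on `O = G \ E` share a common edge, then `x + y ∈ W = {c + c : c ∈ O}`. -/
theorem stmt12 {G : Type*} [AddCommGroup G] [Fintype G] {n : ℕ}
    (hn : Fintype.card G = 2 * n) (E : AddSubgroup G) (hE : E.index = 2)
    (x y : G) (hx : x ∈ E) (hy : y ∈ E) (hxy1 : x ≠ y) (hxy2 : x ≠ -y)
    (hcommon : ((cayley E {x}).edgeSet ∩ (cayley E {y}).edgeSet).Nonempty) :
    x + y ∈ (fun c : G => c + c) '' ((E : Set G)ᶜ) :=
  stmt12_general E x y hxy1 hxy2 hcommon
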